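/- arXiv:1912.04166 — 14 statements merged into one kernel-verified Lean document; each statement's English description precedes it below -/
import Mathlib

section
/- If K ≥ 1, S > 0, T > 0, then with Ψ = ((K-1)T + S)/((K+S)(KT+S) - T) and Θ = (K+S-1)/((K+S)(KT+S) - T), the point (SΨ, SΘ, Ψ, TΘ) is an equilibrium of the system with all four coordinates strictly positive. -/
/-!
Along the ray `(B₁, B₂, T₁, T₂) = (SΨ, SΘ, Ψ, TΘ)` the soil equations `T₁' = 0`, `T₂' = 0` hold
identically, and the plant equations reduce to the linear system
`Ψ + (S + K T) Θ = 1`, `(K + S) Ψ + T Θ = 1`. Its determinant is `-((K + S)(K T + S) - T)`, so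
Cramer's rule gives the stated `Ψ` and `Θ`; for `K ≥ 1` the denominator and both numerators are
positive.
-/

/-- The vector field of the nondimensional plant-soil feedback model. -/
def F (K S T : ℝ) (x : Fin 4 → ℝ) : Fin 4 → ℝ :=
  ![x 0 * (1 - x 1 - x 2 - K * x 3),
    x 1 * (1 - x 0 - x 3 - K * x 2),
    x 0 - S * x 2,
    T * x 1 - S * x 3]

lemma F_eq_zero_of_linear_system {K S T Ψ Θ : ℝ}
    (h₁ : Ψ + (S + K * T) * Θ = 1) (h₂ : (K + S) * Ψ + T * Θ = 1) :
    F K S T ![S * Ψ, S * Θ, Ψ, T * Θ] = 0 := by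
  funext i
  fin_cases i
  · change S * Ψ * (1 - S * Θ - Ψ - K * (T * Θ)) = 0
    rw [show 1 - S * Θ - Ψ - K * (T * Θ) = 0 by linarith, mul_zero]
  · change S * Θ * (1 - S * Ψ - T * Θ - K * Ψ) = 0
    rw [show 1 - S * Ψ - T * Θ - K * Ψ = 0 by linarith, mul_zero]
  · exact sub_self (S * Ψ)
  · exact sub_eq_zero.2 (mul_left_comm T S Θ)

lemma coexistence_ratios_solve_linear_system {K S T : ℝ} (hD : (K + S) * (K * T + S) - T ≠ 0) :
    let Ψ : ℝ := ((K - 1) * T + S) / ((K + S) * (K * T + S) - T)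
    let Θ : ℝ := (K + S - 1) / ((K + S) * (K * T + S) - T)
    Ψ + (S + K * T) * Θ = 1 ∧ (K + S) * Ψ + T * Θ = 1 := by
  constructor <;> field_simp <;> ring

lemma coexistence_denominator_pos {K S T : ℝ} (hK : 1 ≤ K) (hS : 0 < S) (hT : 0 < T) :
    0 < (K + S) * (K * T + S) - T := by
  have hKT : T ≤ K * T := le_mul_of_one_le_left hT.le hK
  nlinarith [mul_le_mul hK hKT hT.le (by linarith), mul_pos hS (by linarith : 0 < K * T + S)]

theorem coexistence_equilibrium_K_ge_one (K S T : ℝ) (hK : 1 ≤ K) (hS : 0 < S) (hT : 0 < T) :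
    let Ψ : ℝ := ((K - 1) * T + S) / ((K + S) * (K * T + S) - T)
    let Θ : ℝ := (K + S - 1) / ((K + S) * (K * T + S) - T)
    F K S T ![S * Ψ, S * Θ, Ψ, T * Θ] = 0 ∧
    0 < S * Ψ ∧ 0 < S * Θ ∧ 0 < Ψ ∧ 0 < T * Θ := by
  intro Ψ Θ
  have hD := coexistence_denominator_pos hK hS hT
  obtain ⟨h₁, h₂⟩ := coexistence_ratios_solve_linear_system hD.ne'
  have hΨ : 0 < Ψ := div_pos (add_pos_of_nonneg_of_pos (mul_nonneg (sub_nonneg.2 hK) hT.le) hS) hD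
  have hΘ : 0 < Θ := div_pos (by linarith) hD
  exact ⟨F_eq_zero_of_linear_system h₁ h₂, mul_pos hS hΨ, mul_pos hS hΘ, hΨ, mul_pos hT hΘ⟩
end

section
/- Let S > 0, T > 0 and suppose -1 ≤ K < 1 with either (S < 1 - K and T > S/(1-K)) or (S > 1 - K and T < S/(1-K)). Then the quantities Ψ = ((K-1)T + S)/((K+S)(KT+S) - T) and Θ = (K+S-1)/((K+S)(KT+S) - T) are both strictly positive. -/
theorem psi_theta_positive (K S T : ℝ) (hS : 0 < S) (hT : 0 < T)
    (hK1 : -1 ≤ K) (hK2 : K < 1)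
    (hcase : (S < 1 - K ∧ S / (1 - K) < T) ∨ (1 - K < S ∧ T < S / (1 - K))) :
    0 < ((K - 1) * T + S) / ((K + S) * (K * T + S) - T) ∧
    0 < (K + S - 1) / ((K + S) * (K * T + S) - T) := by
  have h1K : 0 < 1 - K := by linarith
  have hKT : 0 ≤ (1 + K) * T := mul_nonneg (by linarith) hT.le
  rcases hcase with ⟨h1, h2⟩ | ⟨h1, h2⟩
  · have h2' : S < (1 - K) * T := by
      have := (div_lt_iff₀ h1K).mp h2
      nlinarith
    have hN1 : (K - 1) * T + S < 0 := by nlinarith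
    have hN2 : K + S - 1 < 0 := by linarith
    have hD : (K + S) * (K * T + S) - T < 0 := by
      nlinarith [mul_pos (show (0:ℝ) < 1 - (K + S) by linarith)
          (show (0:ℝ) < T + (K * T + S) by nlinarith),
        mul_pos (show (0:ℝ) < 1 + (K + S) by linarith)
          (show (0:ℝ) < T - (K * T + S) by nlinarith)]
    exact ⟨div_pos_of_neg_of_neg hN1 hD, div_pos_of_neg_of_neg (by linarith) hD⟩
  · have h2' : (1 - K) * T < S := by
      have := (lt_div_iff₀ h1K).mp h2
      nlinarith
    have hN1 : 0 < (K - 1) * T + S := by nlinarith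
    have hN2 : 0 < K + S - 1 := by linarith
    have hD : 0 < (K + S) * (K * T + S) - T := by
      nlinarith [mul_pos hN2 (show (0:ℝ) < K * T + S by nlinarith)]
    exact ⟨div_pos hN1 hD, div_pos hN2 hD⟩
end

section
/- Let S > 0 and K = 1 - S, T = 1. Then for every b with 0 < b < S, the point (b, S - b, b/S, (S-b)/S) is an equilibrium of the system B₁' = B₁(1 - B₂ - T₁ - K·T₂), B₂' = B₂(1 - B₁ - T₂ - K·T₁), T₁' = B₁ - S·T₁, T₂' = T·B₂ - S·T₂; hence the system admits infinitely many coexistence equilibria. -/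
theorem F_eq_zero_of_growth_eq_zero {K S T : ℝ} {x : Fin 4 → ℝ}
    (hgrowth₁ : 1 - x 1 - x 2 - K * x 3 = 0) (hgrowth₂ : 1 - x 0 - x 3 - K * x 2 = 0)
    (hsoil₁ : x 0 - S * x 2 = 0) (hsoil₂ : T * x 1 - S * x 3 = 0) :
    F K S T x = 0 := by
  funext i
  fin_cases i <;> simp [F, hgrowth₁, hgrowth₂, hsoil₁, hsoil₂]

theorem infinitely_many_coexistence_equilibria_general (S : ℝ) (hS : 0 < S)
    (b : ℝ) :
    F (1 - S) S 1 ![b, S - b, b / S, (S - b) / S] = 0 := by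
  have hS₀ : S ≠ 0 := hS.ne'
  apply F_eq_zero_of_growth_eq_zero <;>
    simp only [Matrix.cons_val_zero, Matrix.cons_val_one, Matrix.cons_val_two, Matrix.cons_val_three,
      Matrix.head_cons, Matrix.tail_cons] <;>
    field_simp <;> ring

theorem infinitely_many_coexistence_equilibria (S : ℝ) (hS : 0 < S)
    (b : ℝ) (hb0 : 0 < b) (hbS : b < S) :
    F (1 - S) S 1 ![b, S - b, b / S, (S - b) / S] = 0 :=
  infinitely_many_coexistence_equilibria_general S hS b
end

section
/- Let S > 0, T > 0, K ∈ ℝ. The Jacobian matrix of the plant–soil system evaluated at E₁ = (0, S/T, 0, 1) has characteristic polynomial with roots -S, 1 - K - S/T, and -(S ± √(S(S-4)))/2. Consequently all eigenvalues have negative real part if and only if K > 1 - S/T. -/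
open Polynomial

/-- Jacobian of the plant-soil model evaluated at E₁ = (0, S/T, 0, 1), over ℂ. -/
noncomputable def JE1 (K S T : ℝ) : Matrix (Fin 4) (Fin 4) ℂ :=
  !![1 - (S : ℂ) / T - 0 - (K : ℂ) * 1, -0, -0, -(K : ℂ) * 0;
     -((S : ℂ) / T), 1 - 0 - (K : ℂ) * 0 - 1, -(K : ℂ) * ((S : ℂ) / T), -((S : ℂ) / T);
     1, 0, -(S : ℂ), 0;
     0, (T : ℂ), 0, -(S : ℂ)]

private lemma det_fin_four' {R : Type*} [CommRing R] (M : Matrix (Fin 4) (Fin 4) R) :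
    M.det =
      M 0 0 * (M 1 1 * (M 2 2 * M 3 3 - M 2 3 * M 3 2)
             - M 1 2 * (M 2 1 * M 3 3 - M 2 3 * M 3 1)
             + M 1 3 * (M 2 1 * M 3 2 - M 2 2 * M 3 1))
    - M 0 1 * (M 1 0 * (M 2 2 * M 3 3 - M 2 3 * M 3 2)
             - M 1 2 * (M 2 0 * M 3 3 - M 2 3 * M 3 0)
             + M 1 3 * (M 2 0 * M 3 2 - M 2 2 * M 3 0))
    + M 0 2 * (M 1 0 * (M 2 1 * M 3 3 - M 2 3 * M 3 1)
             - M 1 1 * (M 2 0 * M 3 3 - M 2 3 * M 3 0)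
             + M 1 3 * (M 2 0 * M 3 1 - M 2 1 * M 3 0))
    - M 0 3 * (M 1 0 * (M 2 1 * M 3 2 - M 2 2 * M 3 1)
             - M 1 1 * (M 2 0 * M 3 2 - M 2 2 * M 3 0)
             + M 1 2 * (M 2 0 * M 3 1 - M 2 1 * M 3 0)) := by
  rw [Matrix.det_succ_row_zero]
  simp only [Fin.sum_univ_succ, Fin.sum_univ_zero, Matrix.det_fin_three, Matrix.submatrix_apply,
    Fin.succAbove_zero, Function.comp]
  norm_num [Fin.succAbove, Fin.lt_def, Fin.succ]
  simp only [show (⟨2, by omega⟩ : Fin 4) = 2 from rfl, show (⟨3, by omega⟩ : Fin 4) = 3 from rfl,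
    show Fin.castSucc (2 : Fin 3) = (2 : Fin 4) from rfl]
  ring

private lemma JE1_charpoly (K S T : ℝ) (hT : (T:ℂ) ≠ 0) :
    (JE1 K S T).charpoly =
      (X - C (1 - (K:ℂ) - (S:ℂ)/T)) * (X + C (S:ℂ)) * (X^2 + C (S:ℂ) * X + C (S:ℂ)) := by
  have e3 : C ((T:ℂ)) * C ((S:ℂ)/(T:ℂ)) = C ((S:ℂ)) := by
    rw [← C_mul, mul_div_cancel₀ _ hT]
  have hcm : (JE1 K S T).charmatrix =
      !![X - C (1 - (S : ℂ) / T - 0 - (K : ℂ) * 1), 0, 0, 0;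
         C ((S : ℂ) / T), X - C (1 - 0 - (K : ℂ) * 0 - 1), C ((K:ℂ) * ((S : ℂ) / T)), C ((S : ℂ) / T);
         -1, 0, X + C (S : ℂ), 0;
         0, -C (T : ℂ), 0, X + C (S : ℂ)] := by
    ext i j
    fin_cases i <;> fin_cases j <;>
      simp [JE1, Matrix.charmatrix_apply, Matrix.diagonal_apply]
  rw [Matrix.charpoly, hcm, det_fin_four']
  simp only [Matrix.cons_val', Matrix.cons_val_zero, Matrix.cons_val_one, Matrix.head_cons,
    Matrix.empty_val', Matrix.cons_val_fin_one, Matrix.cons_val_two, Matrix.cons_val_three,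
    Matrix.tail_cons, Matrix.of_apply, Matrix.head_fin_const]
  simp only [_root_.map_sub, _root_.map_mul, _root_.map_one, C_0, map_neg]
  linear_combination (X - (1 - C ((K:ℂ)) - C ((S:ℂ)/(T:ℂ)))) * (X + C (S:ℂ)) * e3

theorem E1_eigenvalues_and_stability (K S T : ℝ) (hS : 0 < S) (hT : 0 < T) :
    let d : ℂ := ((S : ℂ) * ((S : ℂ) - 4)) ^ ((1 : ℂ) / 2)
    (JE1 K S T).charpoly.roots =
      {-(S : ℂ), 1 - (K : ℂ) - (S : ℂ) / T, -((S : ℂ) + d) / 2, -((S : ℂ) - d) / 2} ∧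
    ((∀ μ ∈ (JE1 K S T).charpoly.roots, μ.re < 0) ↔ 1 - S / T < K) := by
  intro d
  have hTC : (T:ℂ) ≠ 0 := by exact_mod_cast hT.ne'
  set s : ℂ := (S:ℂ) with hs
  -- key algebraic fact about d
  have hd : d * d = s * (s - 4) := by
    show ((s * (s - 4)) ^ ((1:ℂ)/2)) * ((s * (s - 4)) ^ ((1:ℂ)/2)) = s * (s - 4)
    by_cases hz : s * (s - 4) = 0
    · rw [hz, Complex.zero_cpow (by norm_num), mul_zero]
    · rw [← Complex.cpow_add _ _ hz]
      norm_num
  set b : ℂ := 1 - (K:ℂ) - (S:ℂ)/T with hb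
  set r1 : ℂ := -(s + d) / 2 with hr1
  set r2 : ℂ := -(s - d) / 2 with hr2
  have hsum : r1 + r2 = -s := by rw [hr1, hr2]; ring
  have hprod : r1 * r2 = s := by
    rw [hr1, hr2]; linear_combination (-(1:ℂ)/4) * hd
  have hquad : (X - C r1) * (X - C r2) = X^2 + C s * X + C s := by
    have e1 : C r1 + C r2 = -C s := by rw [← C_add, hsum, map_neg]
    have e2 : C r1 * C r2 = C s := by rw [← C_mul, hprod]
    linear_combination (-X) * e1 + e2
  have hfac : (JE1 K S T).charpoly =
      (Multiset.map (fun c => X - C c) ({-s, b, r1, r2} : Multiset ℂ)).prod := by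
    rw [JE1_charpoly K S T hTC]
    simp only [Multiset.insert_eq_cons, Multiset.map_cons, Multiset.map_singleton,
      Multiset.prod_cons, Multiset.prod_singleton]
    rw [← hquad]
    rw [map_neg]
    ring
  have hroots : (JE1 K S T).charpoly.roots = ({-s, b, r1, r2} : Multiset ℂ) := by
    rw [hfac, Polynomial.roots_multiset_prod_X_sub_C]
  refine ⟨hroots, ?_⟩
  rw [hroots]
  -- real parts
  have hbre : b.re = 1 - K - S / T := by
    rw [hb]; simp [Complex.sub_re, Complex.div_re]; field_simp
  have hsre : (-s).re = -S := by simp [hs]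
  -- bounds on d.re
  have hdre2 : d.re * d.re - d.im * d.im = S * (S - 4) := by
    have := congrArg Complex.re hd
    simpa [Complex.mul_re, hs] using this
  have hdim : d.re * d.im + d.im * d.re = 0 := by
    have := congrArg Complex.im hd
    simpa [Complex.mul_im, hs] using this
  have hdlt : d.re < S ∧ -S < d.re := by
    rcases mul_eq_zero.mp (by linarith : d.re * d.im = 0) with h | h
    · constructor <;> simp [h] <;> linarith
    · rw [h] at hdre2
      constructor <;> nlinarith [hdre2]
  have hr1re : r1.re < 0 := by
    rw [hr1]
    have : (-(s + d) / 2).re = -(S + d.re) / 2 := by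
      simp [Complex.div_re, Complex.neg_re, Complex.add_re, hs]
    rw [this]; linarith [hdlt.2]
  have hr2re : r2.re < 0 := by
    rw [hr2]
    have : (-(s - d) / 2).re = -(S - d.re) / 2 := by
      simp [Complex.div_re, Complex.neg_re, Complex.sub_re, hs]
    rw [this]; linarith [hdlt.1]
  constructor
  · intro h
    have hbmem : b ∈ ({-s, b, r1, r2} : Multiset ℂ) := by simp
    have := h b hbmem
    rw [hbre] at this
    linarith
  · intro hK μ hμ
    simp only [Multiset.insert_eq_cons, Multiset.mem_cons, Multiset.mem_singleton] at hμ
    rcases hμ with rfl | rfl | rfl | rfl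
    · rw [hsre]; linarith
    · rw [hbre]; linarith
    · exact hr1re
    · exact hr2re
end

section
/- Let S > 0, T > 0, K ∈ ℝ. The Jacobian of the plant–soil system at E₂ = (S, 0, 1, 0) has eigenvalues -S, 1 - K - S, and -(S ± √(S(S-4)))/2. Consequently all eigenvalues have negative real part if and only if K > 1 - S. -/
/-!
The second row of the Jacobian has only its diagonal entry nonzero, and so has the last row once
the second row and column are removed; hence `χ(λ) = (λ + S)(λ - (1 - K - S))(λ² + Sλ + S)`. The principal square root `d` of the real
number `S(S - 4)` satisfies `|Re d| < S`, so both roots `-(S ± d)/2` of the quadratic factor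
lie in the open left half-plane, and stability is decided by the eigenvalue `1 - K - S` alone.
-/

open Polynomial

/-- Jacobian of the plant-soil model evaluated at E₂ = (S, 0, 1, 0), over ℂ. -/
noncomputable def JE2 (K S T : ℝ) : Matrix (Fin 4) (Fin 4) ℂ :=
  !![1 - 0 - 1 - (K : ℂ) * 0, -(S : ℂ), -(S : ℂ), -(K : ℂ) * S;
     -0, 1 - (S : ℂ) - (K : ℂ) * 1 - 0, -(K : ℂ) * 0, -0;
     1, 0, -(S : ℂ), 0;
     0, (T : ℂ), 0, -(S : ℂ)]

theorem sq_cpow_one_div_two (z : ℂ) : (z ^ ((1 : ℂ) / 2)) ^ 2 = z := by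
  rw [one_div]; exact Complex.cpow_ofNat_inv_pow z 2

theorem X_sq_add_C_mul_X_add_C_eq_mul {F : Type*} [Field F] [NeZero (2 : F)] {b c d : F}
    (hd : d ^ 2 = b ^ 2 - 4 * c) :
    X ^ 2 + C b * X + C c = (X - C (-(b + d) / 2)) * (X - C (-(b - d) / 2)) := by
  have hc : c = (-(b + d) / 2) * (-(b - d) / 2) := by
    field_simp; linear_combination hd
  rw [hc]
  have hb : C b = - C (-(b + d) / 2) - C (-(b - d) / 2) := by
    rw [← map_neg, ← map_sub]; congr 1; field_simp; ring
  rw [hb, map_mul]; ring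

theorem charpoly_JE2 (K S T : ℝ) : (JE2 K S T).charpoly =
    (X + C (S : ℂ)) * (X - C (1 - (K : ℂ) - S)) * (X ^ 2 + C (S : ℂ) * X + C (S : ℂ)) := by
  rw [Matrix.charpoly, Matrix.det_succ_row_zero]
  simp [Fin.sum_univ_succ, Matrix.det_fin_three, Fin.succAbove, JE2, Matrix.charmatrix_apply]
  ring

theorem abs_re_cpow_inv_two_lt {x y : ℝ} (hy : 0 < y) (hxy : x < y ^ 2) :
    |((x : ℂ) ^ (2⁻¹ : ℂ)).re| < y := by
  rw [Complex.cpow_inv_two_re, Complex.norm_real, Real.norm_eq_abs, Complex.ofReal_re,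
    abs_of_nonneg (Real.sqrt_nonneg _), Real.sqrt_lt' hy]
  rcases abs_cases x with ⟨h, -⟩ | ⟨h, -⟩ <;> rw [h] <;> nlinarith

theorem roots_charpoly_JE2 (K S T : ℝ) {d : ℂ} (hd : d ^ 2 = (S : ℂ) * ((S : ℂ) - 4)) :
    (JE2 K S T).charpoly.roots =
      {-(S : ℂ), 1 - (K : ℂ) - (S : ℂ), -((S : ℂ) + d) / 2, -((S : ℂ) - d) / 2} := by
  have hdisc : d ^ 2 = (S : ℂ) ^ 2 - 4 * S := by rw [hd]; ring
  rw [charpoly_JE2, X_sq_add_C_mul_X_add_C_eq_mul hdisc, ← roots_multiset_prod_X_sub_C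
    ({-(S : ℂ), 1 - (K : ℂ) - (S : ℂ), -((S : ℂ) + d) / 2, -((S : ℂ) - d) / 2} : Multiset ℂ)]
  congr 1
  simp only [Multiset.insert_eq_cons, Multiset.map_cons, Multiset.prod_cons, Multiset.map_singleton,
    Multiset.prod_singleton, map_neg, sub_neg_eq_add]
  ring

theorem E2_eigenvalues_and_stability_general (K S T : ℝ) (hS : 0 < S) :
    let d : ℂ := ((S : ℂ) * ((S : ℂ) - 4)) ^ ((1 : ℂ) / 2)
    (JE2 K S T).charpoly.roots =
      {-(S : ℂ), 1 - (K : ℂ) - (S : ℂ), -((S : ℂ) + d) / 2, -((S : ℂ) - d) / 2} ∧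
    ((∀ μ ∈ (JE2 K S T).charpoly.roots, μ.re < 0) ↔ 1 - S < K) := by
  intro d
  have hroots := roots_charpoly_JE2 K S T (sq_cpow_one_div_two ((S : ℂ) * ((S : ℂ) - 4)))
  have hd : |d.re| < S := by
    have : d = ((S * (S - 4) : ℝ) : ℂ) ^ (2⁻¹ : ℂ) := by push_cast [d, one_div]; rfl
    exact this ▸ abs_re_cpow_inv_two_lt hS (by nlinarith)
  refine ⟨hroots, ?_⟩
  rw [hroots]
  simp only [Multiset.insert_eq_cons, Multiset.mem_cons, Multiset.mem_singleton,
    forall_eq_or_imp, forall_eq, Complex.neg_re, Complex.sub_re, Complex.one_re,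
    Complex.ofReal_re, Complex.div_ofNat_re, Complex.add_re]
  obtain ⟨hd₁, hd₂⟩ := abs_lt.mp hd
  constructor
  · rintro ⟨-, hK, -, -⟩
    linarith
  · intro hK
    exact ⟨by linarith, by linarith, by linarith, by linarith⟩

theorem E2_eigenvalues_and_stability (K S T : ℝ) (hS : 0 < S) (hT : 0 < T) :
    let d : ℂ := ((S : ℂ) * ((S : ℂ) - 4)) ^ ((1 : ℂ) / 2)
    (JE2 K S T).charpoly.roots =
      {-(S : ℂ), 1 - (K : ℂ) - (S : ℂ), -((S : ℂ) + d) / 2, -((S : ℂ) - d) / 2} ∧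
    ((∀ μ ∈ (JE2 K S T).charpoly.roots, μ.re < 0) ↔ 1 - S < K) :=
  E2_eigenvalues_and_stability_general K S T hS
end

section
/- Let S > 0, T = 1. The characteristic polynomial of the Jacobian of the plant–soil system at the symmetric coexistence equilibrium Ē₃ = (S/(K+S+1), S/(K+S+1), 1/(K+S+1), 1/(K+S+1)) is λ⁴ + A₁λ³ + A₂λ² + A₃λ + A₄ with A₁ = 2S, A₂ = S[(2K+S+2)/(K+S+1)² + S], A₃ = 2S²/(K+S+1)², A₄ = S²(1-K-S)/(1+K+S). -/
/-!
Ē₃ and the Jacobian are invariant under swapping the two plant–soil pairs, so in the basis of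
symmetric and antisymmetric vectors the Jacobian splits into two 2 × 2 blocks, and the
characteristic polynomial is the product of two quadratics. At Ē₃ the diagonal entries
1 - (K + S + 1)/(K + S + 1) of the plant block vanish, which makes the quadratics explicit.
-/

open Polynomial Matrix

/-- Jacobian of the plant-soil model with T = 1 evaluated at the symmetric
coexistence equilibrium Ē₃ = (S/(K+S+1), S/(K+S+1), 1/(K+S+1), 1/(K+S+1)). -/
noncomputable def JE3 (K S : ℝ) : Matrix (Fin 4) (Fin 4) ℝ :=
  let b := S / (K + S + 1)
  let t := 1 / (K + S + 1)
  !![1 - b - t - K * t, -b, -b, -K * b;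
     -b, 1 - b - K * t - t, -K * b, -b;
     1, 0, -S, 0;
     0, 1, 0, -S]

/-- In the basis `e₀ + e₁, e₂ + e₃, e₀ - e₁, e₂ - e₃` the matrix is block diagonal. -/
theorem charpoly_of_swap_symmetric {R : Type*} [CommRing R] [Nontrivial R]
    (p q r s u v w z : R) :
    (!![p, q, r, s; q, p, s, r; u, v, w, z; v, u, z, w] : Matrix (Fin 4) (Fin 4) R).charpoly =
      (!![p + q, r + s; u + v, w + z] : Matrix (Fin 2) (Fin 2) R).charpoly *
        (!![p - q, r - s; u - v, w - z] : Matrix (Fin 2) (Fin 2) R).charpoly := by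
  simp only [charpoly_fin_two, trace_fin_two_of, det_fin_two_of]
  rw [charpoly, det_succ_row_zero]
  simp [Fin.sum_univ_succ, det_succ_row_zero, Fin.succAbove, submatrix_apply, charmatrix_apply,
    diagonal_apply]
  ring

theorem quadratic_mul_quadratic {R : Type*} [CommRing R] {t₁ d₁ t₂ d₂ a₃ a₂ a₁ a₀ : R}
    (h₃ : a₃ = -(t₁ + t₂)) (h₂ : a₂ = d₁ + d₂ + t₁ * t₂) (h₁ : a₁ = -(t₁ * d₂ + t₂ * d₁))
    (h₀ : a₀ = d₁ * d₂) :
    (X ^ 2 - C t₁ * X + C d₁) * (X ^ 2 - C t₂ * X + C d₂) =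
      X ^ 4 + C a₃ * X ^ 3 + C a₂ * X ^ 2 + C a₁ * X + C a₀ := by
  subst h₃ h₂ h₁ h₀
  simp only [map_add, map_mul, map_neg]
  ring

theorem JE3_eq {K S : ℝ} (h : K + S + 1 ≠ 0) :
    JE3 K S = !![0, -(S / (K + S + 1)), -(S / (K + S + 1)), -K * (S / (K + S + 1));
      -(S / (K + S + 1)), 0, -K * (S / (K + S + 1)), -(S / (K + S + 1));
      1, 0, -S, 0;
      0, 1, 0, -S] := by
  ext i j
  fin_cases i <;> fin_cases j <;> simp [JE3] <;> field_simp <;> ring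

theorem charpoly_at_symmetric_equilibrium_general (K S : ℝ) (h : K + S + 1 ≠ 0) :
    (JE3 K S).charpoly =
      X ^ 4 + C (2 * S) * X ^ 3
        + C (S * ((2 * K + S + 2) / (K + S + 1) ^ 2 + S)) * X ^ 2
        + C (2 * S ^ 2 / (K + S + 1) ^ 2) * X
        + C (S ^ 2 * (1 - K - S) / (1 + K + S)) := by
  have h' : 1 + K + S ≠ 0 := fun h₀ => h (by linarith)
  rw [JE3_eq h, charpoly_of_swap_symmetric, charpoly_fin_two, charpoly_fin_two]
  simp only [trace_fin_two_of, det_fin_two_of]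
  apply quadratic_mul_quadratic <;> field_simp <;> ring

theorem charpoly_at_symmetric_equilibrium (K S : ℝ) (hS : 0 < S) (h : K + S + 1 ≠ 0) :
    (JE3 K S).charpoly =
      X ^ 4 + C (2 * S) * X ^ 3
        + C (S * ((2 * K + S + 2) / (K + S + 1) ^ 2 + S)) * X ^ 2
        + C (2 * S ^ 2 / (K + S + 1) ^ 2) * X
        + C (S ^ 2 * (1 - K - S) / (1 + K + S)) :=
  charpoly_at_symmetric_equilibrium_general K S h
end

section
/- Let S > 0 and set A₁ = 2S, A₂ = S[(2K+S+2)/(K+S+1)² + S], A₃ = 2S²/(K+S+1)², A₄ = S²(1-K-S)/(1+K+S), assuming K + S + 1 > 0. Then the Routh–Hurwitz conditions A₁ > 0, A₃ > 0, A₄ > 0, A₁A₂ - A₃ > 0, A₁A₂A₃ - A₃² - A₁²A₄ > 0 hold if and only if -S < K < 1 - S. -/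
theorem routh_hurwitz_iff (K S : ℝ) (hS : 0 < S) (h : 0 < K + S + 1) :
    let A1 : ℝ := 2 * S
    let A2 : ℝ := S * ((2 * K + S + 2) / (K + S + 1) ^ 2 + S)
    let A3 : ℝ := 2 * S ^ 2 / (K + S + 1) ^ 2
    let A4 : ℝ := S ^ 2 * (1 - K - S) / (1 + K + S)
    (0 < A1 ∧ 0 < A3 ∧ 0 < A4 ∧ 0 < A1 * A2 - A3 ∧
      0 < A1 * A2 * A3 - A3 ^ 2 - A1 ^ 2 * A4) ↔ (-S < K ∧ K < 1 - S) := by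
  intro A1 A2 A3 A4
  have hd : (K + S + 1) ≠ 0 := ne_of_gt h
  have hd2 : (0:ℝ) < (K + S + 1) ^ 2 := by positivity
  have hd4 : (0:ℝ) < (K + S + 1) ^ 4 := by positivity
  have h1 : (0:ℝ) < 1 + K + S := by linarith
  have key5 : A1 * A2 * A3 - A3 ^ 2 - A1 ^ 2 * A4 =
      4 * S ^ 4 * ((K + S) * ((K + S + 2) * ((K + S) ^ 2 + S))) / (K + S + 1) ^ 4 := by
    show (2 * S) * (S * ((2 * K + S + 2) / (K + S + 1) ^ 2 + S)) * (2 * S ^ 2 / (K + S + 1) ^ 2)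
        - (2 * S ^ 2 / (K + S + 1) ^ 2) ^ 2 - (2 * S) ^ 2 * (S ^ 2 * (1 - K - S) / (1 + K + S)) =
        4 * S ^ 4 * ((K + S) * ((K + S + 2) * ((K + S) ^ 2 + S))) / (K + S + 1) ^ 4
    have h1' : (1 + K + S) ≠ 0 := ne_of_gt h1
    field_simp
    ring
  have key4 : A1 * A2 - A3 =
      2 * S ^ 2 * ((K + S + 1) + K + S * (K + S + 1) ^ 2) / (K + S + 1) ^ 2 := by
    show (2 * S) * (S * ((2 * K + S + 2) / (K + S + 1) ^ 2 + S)) - 2 * S ^ 2 / (K + S + 1) ^ 2 =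
        2 * S ^ 2 * ((K + S + 1) + K + S * (K + S + 1) ^ 2) / (K + S + 1) ^ 2
    field_simp
    ring
  constructor
  · rintro ⟨-, -, h4, -, h5⟩
    rw [key5] at h5
    have h5' : 0 < 4 * S ^ 4 * ((K + S) * ((K + S + 2) * ((K + S) ^ 2 + S))) := by
      have := (div_pos_iff.mp h5)
      rcases this with ⟨ha, _⟩ | ⟨_, hb⟩
      · linarith
      · linarith
    have hp : 0 < (K + S + 2) * ((K + S) ^ 2 + S) := by nlinarith [sq_nonneg (K + S)]
    have hKS : 0 < K + S := by
      by_contra hc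
      push_neg at hc
      have hnp : (K + S) * ((K + S + 2) * ((K + S) ^ 2 + S)) ≤ 0 :=
        mul_nonpos_of_nonpos_of_nonneg hc hp.le
      nlinarith [pow_pos hS 4]
    have h4' : 0 < S ^ 2 * (1 - K - S) := by
      have : 0 < S ^ 2 * (1 - K - S) / (1 + K + S) := h4
      rcases div_pos_iff.mp this with ⟨ha, _⟩ | ⟨_, hb⟩
      · exact ha
      · linarith
    constructor
    · linarith
    · nlinarith [sq_nonneg S, pow_pos hS 2]
  · rintro ⟨hKl, hKr⟩
    have hx : 0 < K + S := by linarith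
    refine ⟨by positivity, by positivity, ?_, ?_, ?_⟩
    · show 0 < S ^ 2 * (1 - K - S) / (1 + K + S)
      have : 0 < 1 - K - S := by linarith
      positivity
    · rw [key4]
      have : 0 < (K + S + 1) + K + S * (K + S + 1) ^ 2 := by nlinarith
      positivity
    · rw [key5]
      have : 0 < (K + S) * ((K + S + 2) * ((K + S) ^ 2 + S)) := by positivity
      positivity
end

section
/- Let S > 0, T = 1, and K = -S. Then the eigenvalues of the Jacobian of the plant–soil system at the coexistence equilibrium Ē₃ = (S, S, 1, 1) are -S ± √(S(S-1)) and ±i√S; in particular there is a purely imaginary pair ±i√S, and the other two eigenvalues have negative real part. -/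
open Polynomial

/-!
With `K = -S` the characteristic polynomial factors as `(X² + 2SX + S)(X² + S)`. The second
factor gives `±i√S`; the first has roots `-S ± d` with `d² = S(S - 1)`. The real part of the
principal square root `d` is `√(S(S - 1))` (which is `0` when `S < 1`, where `d` is imaginary),
and it lies in `[0, S)` because `S(S - 1) < S²`.
-/

/-- Jacobian of the plant-soil model with T = 1 evaluated at (B₁,B₂,T₁,T₂) = (S,S,1,1),
with K as a parameter (to be taken equal to -S), over ℂ. -/
noncomputable def JHopf (K S : ℝ) : Matrix (Fin 4) (Fin 4) ℂ :=
  !![1 - (S : ℂ) - 1 - (K : ℂ) * 1, -(S : ℂ), -(S : ℂ), -(K : ℂ) * S;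
     -(S : ℂ), 1 - (S : ℂ) - (K : ℂ) * 1 - 1, -(K : ℂ) * S, -(S : ℂ);
     1, 0, -(S : ℂ), 0;
     0, 1, 0, -(S : ℂ)]

theorem Complex.re_cpow_inv_two_ofReal (x : ℝ) : ((x : ℂ) ^ (2⁻¹ : ℂ)).re = √x := by
  rw [cpow_inv_two_re, norm_real, Real.norm_eq_abs, ofReal_re]
  rcases le_or_gt 0 x with hx | hx
  · rw [abs_of_nonneg hx, add_self_div_two]
  · rw [abs_of_neg hx, neg_add_cancel, zero_div, Real.sqrt_zero, Real.sqrt_eq_zero_of_nonpos hx.le]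

namespace Polynomial

theorem X_sq_add_C_mul_X_add_C_eq_mul {R : Type*} [CommRing R] {b c r s : R}
    (hsum : r + s = -b) (hprod : r * s = c) :
    X ^ 2 + C b * X + C c = (X - C r) * (X - C s) := by
  obtain rfl : b = -(r + s) := by rw [hsum, neg_neg]
  subst hprod
  simp only [map_neg, map_add, map_mul]
  ring

end Polynomial

theorem charpoly_JHopf (S : ℝ) :
    (JHopf (-S) S).charpoly =
      (X ^ 2 + C (2 * (S : ℂ)) * X + C (S : ℂ)) * (X ^ 2 + C (S : ℂ)) := by
  rw [Matrix.charpoly, Matrix.det_succ_row_zero]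
  simp [Fin.sum_univ_succ, Matrix.det_succ_row_zero, Matrix.charmatrix_apply, JHopf, Fin.succAbove,
    map_ofNat C]
  ring

theorem roots_charpoly_JHopf (S : ℝ) {d c : ℂ} (hd : d * d = S * (S - 1)) (hc : c * c = -S) :
    (JHopf (-S) S).charpoly.roots = {-(S : ℂ) + d, -(S : ℂ) - d, c, -c} := by
  have hquad₁ :
      X ^ 2 + C (2 * (S : ℂ)) * X + C (S : ℂ) = (X - C (-S + d)) * (X - C (-S - d)) :=
    X_sq_add_C_mul_X_add_C_eq_mul (by ring) (by linear_combination -hd)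
  have hquad₂ : X ^ 2 + C (S : ℂ) = (X - C c) * (X - C (-c)) := by
    simpa using X_sq_add_C_mul_X_add_C_eq_mul (b := (0 : ℂ)) (r := c) (s := -c) (by ring)
      (by linear_combination -hc)
  rw [← roots_multiset_prod_X_sub_C {-(S : ℂ) + d, -(S : ℂ) - d, c, -c}, charpoly_JHopf,
    hquad₁, hquad₂]
  simp only [Multiset.insert_eq_cons, Multiset.map_cons, Multiset.map_singleton,
    Multiset.prod_cons, Multiset.prod_singleton, mul_assoc]

theorem hopf_eigenvalues (K S : ℝ) (hS : 0 < S) (hK : K = -S) :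
    let d : ℂ := ((S : ℂ) * ((S : ℂ) - 1)) ^ ((1 : ℂ) / 2)
    (JHopf K S).charpoly.roots =
      {-(S : ℂ) + d, -(S : ℂ) - d,
        Complex.I * (Real.sqrt S : ℂ), -(Complex.I * (Real.sqrt S : ℂ))} ∧
    (Complex.I * (Real.sqrt S : ℂ)).re = 0 ∧
    (-(Complex.I * (Real.sqrt S : ℂ))).re = 0 ∧
    (Complex.I * (Real.sqrt S : ℂ)) ≠ 0 ∧
    (-(S : ℂ) + d).re < 0 ∧ (-(S : ℂ) - d).re < 0 := by
  intro d
  subst hK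
  have hd_def : d = ((S * (S - 1) : ℝ) : ℂ) ^ (2⁻¹ : ℂ) := by push_cast [d, one_div]; rfl
  have hd : d * d = S * (S - 1) := by
    rw [← sq, hd_def, Complex.cpow_ofNat_inv_pow]; push_cast; rfl
  have hc : (Complex.I * √S) * (Complex.I * √S) = -S := by
    rw [mul_mul_mul_comm, Complex.I_mul_I, ← Complex.ofReal_mul, Real.mul_self_sqrt hS.le]
    ring
  have hd_re : d.re = √(S * (S - 1)) := by rw [hd_def, Complex.re_cpow_inv_two_ofReal]
  have hd_re_lt : √(S * (S - 1)) < S := (Real.sqrt_lt' hS).2 (by nlinarith)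
  refine ⟨roots_charpoly_JHopf S hd hc, by simp, by simp,
    by simpa using (Real.sqrt_pos.2 hS).ne', ?_, ?_⟩
  · simpa [hd_re] using hd_re_lt
  · simp only [Complex.sub_re, Complex.neg_re, Complex.ofReal_re, hd_re]
    linarith [Real.sqrt_nonneg (S * (S - 1))]
end

section
/- Let S > 0, T = 1, K ≥ 1. Then at least one eigenvalue of the Jacobian of the plant–soil system at Ē₃ = (S/(K+S+1), S/(K+S+1), 1/(K+S+1), 1/(K+S+1)) has positive real part; hence Ē₃ is linearly unstable. -/
open Polynomial

/-- Jacobian of the plant-soil model with T = 1 evaluated at the symmetric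
coexistence equilibrium Ē₃, over ℂ. -/
noncomputable def JE3C (K S : ℝ) : Matrix (Fin 4) (Fin 4) ℂ :=
  let b : ℂ := (S : ℂ) / ((K : ℂ) + S + 1)
  let t : ℂ := 1 / ((K : ℂ) + S + 1)
  !![1 - b - t - (K : ℂ) * t, -b, -b, -(K : ℂ) * b;
     -b, 1 - b - (K : ℂ) * t - t, -(K : ℂ) * b, -b;
     1, 0, -(S : ℂ), 0;
     0, 1, 0, -(S : ℂ)]

/-
The Jacobian at Ē₃ commutes with swapping the two plant and the two soil coordinates, so it
preserves the antisymmetric vectors (x, -x, y, -y). On that plane its eigenvalues are the roots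
of (K+S+1) μ² + S(K+S) μ + S(1-K-S), whose constant term is negative once K ≥ 1; hence one of
them is real and positive.
-/

open Matrix

theorem Matrix.mem_roots_charpoly_of_mulVec_eq_smul {n R : Type*} [Fintype n] [DecidableEq n]
    [CommRing R] [IsDomain R] {A : Matrix n n R} {μ : R} {v : n → R} (hv : v ≠ 0)
    (h : A *ᵥ v = μ • v) : μ ∈ A.charpoly.roots := by
  rw [mem_roots A.charpoly_monic.ne_zero, IsRoot.def, eval_charpoly,
    ← exists_mulVec_eq_zero_iff]
  refine ⟨v, hv, ?_⟩
  ext i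
  simp [sub_mulVec, h]

theorem exists_pos_quadratic_root {a b c : ℝ} (ha : 0 < a) (hc : c < 0) :
    ∃ x, 0 < x ∧ a * (x * x) + b * x + c = 0 := by
  have hdiscrim : b * b < discrim a b c := by unfold discrim; nlinarith
  set s := √(discrim a b c)
  have hs : discrim a b c = s * s := (Real.mul_self_sqrt (by nlinarith)).symm
  have hbs : b < s := by nlinarith [Real.sqrt_nonneg (discrim a b c)]
  exact ⟨(-b + s) / (2 * a), div_pos (by linarith) (by linarith),
    (quadratic_eq_zero_iff ha.ne' hs _).2 (Or.inl rfl)⟩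

theorem JE3C_mulVec_antisymmetric_mode {K S : ℝ} {μ : ℂ} (hD : (K : ℂ) + S + 1 ≠ 0)
    (hμ : ((K : ℂ) + S + 1) * (μ * μ) + S * (K + S) * μ + S * (1 - K - S) = 0) :
    JE3C K S *ᵥ ![μ + S, -(μ + S), 1, -1] = μ • ![μ + S, -(μ + S), 1, -1] := by
  ext i
  fin_cases i <;> simp [JE3C] <;> field_simp
  · linear_combination -hμ
  · linear_combination hμ

theorem E3_unstable_for_K_ge_one (K S : ℝ) (hS : 0 < S) (hK : 1 ≤ K) :
    ∃ μ ∈ (JE3C K S).charpoly.roots, 0 < μ.re := by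
  obtain ⟨x, hx, hroot⟩ := exists_pos_quadratic_root (b := S * (K + S))
    (show 0 < K + S + 1 by linarith) (mul_neg_of_pos_of_neg hS (by linarith : 1 - K - S < 0))
  have hD : (K : ℂ) + S + 1 ≠ 0 := by exact_mod_cast (show K + S + 1 ≠ 0 by linarith)
  refine ⟨x, mem_roots_charpoly_of_mulVec_eq_smul ?_ (JE3C_mulVec_antisymmetric_mode hD ?_),
    by simpa⟩
  · exact fun h => by simpa using congrFun h 2
  · exact_mod_cast hroot
end

section
/- Let S > 0, K = 1 - S, T = 1, and 0 < b < S. The characteristic polynomial of the Jacobian of the plant–soil system at the equilibrium (b, S-b, b/S, (S-b)/S) is λ⁴ + C₁λ³ + C₂λ² + C₃λ, i.e. it has zero constant term, where C₁ = 2 - 2K, C₂ = b² + b(K-1) + K² - 3K + 2, C₃ = 2b² + 2b(K-1) + (K-1)². -/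
open Polynomial

/-- Jacobian of the plant-soil model with T = 1 evaluated at the degenerate
coexistence equilibrium (b, S-b, b/S, (S-b)/S), with K = 1 - S. -/
noncomputable def Jdeg (K S b : ℝ) : Matrix (Fin 4) (Fin 4) ℝ :=
  !![1 - (S - b) - b / S - K * ((S - b) / S), -b, -b, -K * b;
     -(S - b), 1 - b - K * (b / S) - (S - b) / S, -K * (S - b), -(S - b);
     1, 0, -S, 0;
     0, 1, 0, -S]

/-!
With K = 1 - S both diagonal entries of the plant block of the Jacobian vanish at this
equilibrium, so it has the block form [[A, B], [1, -S]] with 2 × 2 blocks. Since the lower blocks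
commute, its characteristic polynomial is the 2 × 2 determinant det ((λ + S)(λ - A) - B).
The constant term vanishes because S • A + B = [[-b, -b], [-(S - b), -(S - b)]] (again by
S + K = 1) is singular.
-/

open Matrix in
theorem Matrix.charpoly_fin_four_of_lower_blocks_one_scalar {R : Type*} [CommRing R]
    (a₁₁ a₁₂ a₂₁ a₂₂ b₁₁ b₁₂ b₂₁ b₂₂ s : R) :
    (!![a₁₁, a₁₂, b₁₁, b₁₂; a₂₁, a₂₂, b₂₁, b₂₂; 1, 0, s, 0; 0, 1, 0, s]).charpoly =
      ((X - C s) * (X - C a₁₁) - C b₁₁) * ((X - C s) * (X - C a₂₂) - C b₂₂)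
        - ((X - C s) * C a₁₂ + C b₁₂) * ((X - C s) * C a₂₁ + C b₂₁) := by
  rw [charpoly, det_succ_row_zero]
  simp only [Fin.sum_univ_four, det_fin_three, submatrix_apply, charmatrix_apply, Fin.succAbove,
    of_apply, cons_val, diagonal_apply, Fin.reduceLT, Fin.reduceCastSucc, Fin.reduceSucc,
    Fin.reduceEq, if_true, if_false, map_zero, map_one, Fin.coe_ofNat_eq_mod]
  ring

theorem Jdeg_eq_of_eq_one_sub {K S b : ℝ} (hS : S ≠ 0) (hK : K = 1 - S) :
    Jdeg K S b =
      !![0, -b, -b, -K * b;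
         -(S - b), 0, -K * (S - b), -(S - b);
         1, 0, -S, 0;
         0, 1, 0, -S] := by
  have h₁ : 1 - (S - b) - b / S - K * ((S - b) / S) = 0 := by
    subst hK; field_simp; ring
  have h₂ : 1 - b - K * (b / S) - (S - b) / S = 0 := by
    subst hK; field_simp; ring
  rw [Jdeg, h₁, h₂]

theorem charpoly_degenerate_equilibria_general (K S b : ℝ) (hS : 0 < S) (hK : K = 1 - S) :
    (Jdeg K S b).charpoly =
      X ^ 4 + C (2 - 2 * K) * X ^ 3
        + C (b ^ 2 + b * (K - 1) + K ^ 2 - 3 * K + 2) * X ^ 2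
        + C (2 * b ^ 2 + 2 * b * (K - 1) + (K - 1) ^ 2) * X := by
  rw [Jdeg_eq_of_eq_one_sub hS.ne' hK, Matrix.charpoly_fin_four_of_lower_blocks_one_scalar]
  subst hK
  simp only [map_neg, map_sub, map_add, map_mul, map_pow, map_one, map_zero, map_ofNat]
  ring

theorem charpoly_degenerate_equilibria (K S b : ℝ) (hS : 0 < S) (hK : K = 1 - S)
    (hb0 : 0 < b) (hbS : b < S) :
    (Jdeg K S b).charpoly =
      X ^ 4 + C (2 - 2 * K) * X ^ 3
        + C (b ^ 2 + b * (K - 1) + K ^ 2 - 3 * K + 2) * X ^ 2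
        + C (2 * b ^ 2 + 2 * b * (K - 1) + (K - 1) ^ 2) * X :=
  charpoly_degenerate_equilibria_general K S b hS hK
end

section
/- Let S > 0, T > 0, D_B > 0, K ∈ ℝ, and h ≥ 0. The eigenvalues of the matrix L_h at E₁ = (0, S/T, 0, 1) are -S, 1 - h - K - S/T, and -(D_B·h + S ± √((S - D_B·h)² - 4S))/2. All these eigenvalues have negative real part for every h ≥ 0 if and only if K > 1 - S/T. -/
open Polynomial

/-- Diffusion-modified Jacobian of the plant-soil model at E₁ = (0, S/T, 0, 1):
the Jacobian with h subtracted from the (1,1) entry and D·h from the (2,2) entry. -/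
noncomputable def LE1 (K S T D : ℝ) (h : ℝ) : Matrix (Fin 4) (Fin 4) ℂ :=
  !![1 - (S : ℂ) / T - 0 - (K : ℂ) * 1 - (h : ℂ), -0, -0, -(K : ℂ) * 0;
     -((S : ℂ) / T), 1 - 0 - (K : ℂ) * 0 - 1 - (D : ℂ) * h, -(K : ℂ) * ((S : ℂ) / T), -((S : ℂ) / T);
     1, 0, -(S : ℂ), 0;
     0, (T : ℂ), 0, -(S : ℂ)]

set_option maxHeartbeats 1000000 in
lemma charpoly_LE1 (K S T D h : ℝ) (hT : (T : ℂ) ≠ 0) :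
    (LE1 K S T D h).charpoly =
      (X - C (-(S:ℂ))) * (X - C (1 - (h:ℂ) - K - (S:ℂ)/T)) *
        (X^2 + C ((D:ℂ)*h + S) * X + C ((S:ℂ)*((D:ℂ)*h+1))) := by
  have hch : Matrix.charmatrix (LE1 K S T D h) =
      !![X - C (1 - (S:ℂ)/T - 0 - K*1 - h), 0, 0, 0;
         C ((S:ℂ)/T), X - C (1 - 0 - (K:ℂ)*0 - 1 - D*h), C ((K:ℂ)*((S:ℂ)/T)), C ((S:ℂ)/T);
         -C (1:ℂ), 0, X + C (S:ℂ), 0;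
         0, -C (T:ℂ), 0, X + C (S:ℂ)] := by
    ext i j
    fin_cases i <;> fin_cases j <;>
      simp [Matrix.charmatrix_apply, LE1]
  rw [Matrix.charpoly, hch]
  simp [Matrix.det_succ_row_zero, Fin.sum_univ_succ, Matrix.det_fin_three]
  have hS : C ((S:ℂ)/T) * C (T:ℂ) = C (S:ℂ) := by
    rw [← C_mul]; congr 1; field_simp
  linear_combination (X - (1 - C ((S:ℂ)/T) - C (K:ℂ) - C (h:ℂ))) * (X + C (S:ℂ)) * hS

lemma cpow_half_of_nonneg (w : ℝ) (hw : 0 ≤ w) :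
    (w : ℂ) ^ ((1:ℂ)/2) = ((Real.sqrt w : ℝ) : ℂ) := by
  rw [Real.sqrt_eq_rpow, Complex.ofReal_cpow hw]
  norm_num

lemma cpow_half_re_of_neg (w : ℝ) (hw : w < 0) :
    ((w : ℂ) ^ ((1:ℂ)/2)).re = 0 := by
  rw [Complex.ofReal_cpow_of_nonpos hw.le]
  rw [show (-(w:ℂ)) = ((-w : ℝ) : ℂ) by push_cast; ring,
    cpow_half_of_nonneg _ (by linarith),
    show (↑Real.pi * Complex.I * ((1:ℂ)/2) : ℂ) = ((Real.pi/2 : ℝ):ℂ) * Complex.I by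
      push_cast; ring,
    Complex.exp_mul_I, ← Complex.ofReal_cos, ← Complex.ofReal_sin,
    Real.cos_pi_div_two, Real.sin_pi_div_two]
  simp

lemma roots_LE1 (K S T D : ℝ) (hT : (T:ℂ) ≠ 0) (h : ℝ) :
    (LE1 K S T D h).charpoly.roots =
      {-(S : ℂ), 1 - (h : ℂ) - (K : ℂ) - (S : ℂ) / T,
        -((D : ℂ) * h + S + (((S : ℂ) - (D : ℂ) * h) ^ 2 - 4 * (S : ℂ)) ^ ((1 : ℂ) / 2)) / 2,
        -((D : ℂ) * h + S - (((S : ℂ) - (D : ℂ) * h) ^ 2 - 4 * (S : ℂ)) ^ ((1 : ℂ) / 2)) / 2} := by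
  set d : ℂ := (((S : ℂ) - (D : ℂ) * h) ^ 2 - 4 * (S : ℂ)) ^ ((1 : ℂ) / 2) with hd
  have hd2 : d ^ 2 = ((S:ℂ) - D*h)^2 - 4*S := by
    rw [hd, show ((1:ℂ)/2) = (((2:ℕ)):ℂ)⁻¹ by norm_num]
    exact Complex.cpow_nat_inv_pow _ two_ne_zero
  have key : (LE1 K S T D h).charpoly =
      (Multiset.map (fun a => X - C a)
        ({-(S : ℂ), 1 - (h : ℂ) - (K : ℂ) - (S : ℂ) / T,
          -((D : ℂ) * h + S + d) / 2, -((D : ℂ) * h + S - d) / 2} : Multiset ℂ)).prod := by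
    rw [charpoly_LE1 K S T D h hT]
    refine Polynomial.funext fun x => ?_
    simp only [Multiset.insert_eq_cons, Multiset.map_cons, Multiset.map_singleton,
      Multiset.prod_cons, Multiset.prod_singleton, eval_mul, eval_sub, eval_add,
      eval_pow, eval_X, eval_C]
    linear_combination ((x + (S:ℂ)) * (x - (1 - h - K - (S:ℂ)/T)) / 4) * hd2
  rw [key, Polynomial.roots_multiset_prod_X_sub_C]

theorem E1_spatial_eigenvalues_and_stability (K S T D h : ℝ)
    (hS : 0 < S) (hT : 0 < T) (hD : 0 < D) (hh : 0 ≤ h) :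
    let d : ℂ := (((S : ℂ) - (D : ℂ) * h) ^ 2 - 4 * (S : ℂ)) ^ ((1 : ℂ) / 2)
    (LE1 K S T D h).charpoly.roots =
      {-(S : ℂ), 1 - (h : ℂ) - (K : ℂ) - (S : ℂ) / T,
        -((D : ℂ) * h + S + d) / 2, -((D : ℂ) * h + S - d) / 2} ∧
    ((∀ h' : ℝ, 0 ≤ h' → ∀ μ ∈ (LE1 K S T D h').charpoly.roots, μ.re < 0) ↔
      1 - S / T < K) := by
  have hT' : (T : ℂ) ≠ 0 := by exact_mod_cast hT.ne'
  refine ⟨roots_LE1 K S T D hT' h, ?_, ?_⟩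
  · -- stability → K > 1 - S/T
    intro H
    have hmem : (1 - ((0:ℝ) : ℂ) - (K : ℂ) - (S : ℂ) / T) ∈ (LE1 K S T D 0).charpoly.roots := by
      rw [roots_LE1 K S T D hT' 0]
      simp
    have := H 0 le_rfl _ hmem
    rw [show (1 - ((0:ℝ) : ℂ) - (K : ℂ) - (S : ℂ) / T) = ((1 - 0 - K - S/T : ℝ) : ℂ) by
      push_cast; ring, Complex.ofReal_re] at this
    linarith
  · -- K > 1 - S/T → stability
    intro hK h' hh' μ hmem
    rw [roots_LE1 K S T D hT' h'] at hmem
    have hc : 0 < D * h' + S := by positivity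
    set w : ℝ := (S - D * h') ^ 2 - 4 * S with hw
    have hwc : (((S : ℂ) - (D : ℂ) * h') ^ 2 - 4 * (S : ℂ)) = ((w : ℝ) : ℂ) := by
      rw [hw]; push_cast; ring
    have hwlt : w < (D * h' + S) ^ 2 := by
      nlinarith [mul_nonneg (mul_nonneg hS.le hD.le) hh']
    simp only [Multiset.insert_eq_cons, Multiset.mem_cons, Multiset.mem_singleton] at hmem
    rcases hmem with rfl | rfl | rfl | rfl
    · rw [show (-(S:ℂ)) = ((-S : ℝ) : ℂ) by push_cast; ring, Complex.ofReal_re]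
      linarith
    · rw [show (1 - (h':ℂ) - (K : ℂ) - (S : ℂ) / T) = ((1 - h' - K - S/T : ℝ) : ℂ) by
        push_cast; ring, Complex.ofReal_re]
      linarith
    · rcases le_or_gt 0 w with hw0 | hw0
      · rw [hwc, cpow_half_of_nonneg w hw0,
          show -((D:ℂ) * h' + S + ((Real.sqrt w : ℝ) : ℂ)) / 2
              = ((-(D * h' + S + Real.sqrt w) / 2 : ℝ) : ℂ) by push_cast; ring,
          Complex.ofReal_re]
        have := Real.sqrt_nonneg w
        linarith
      · have hre0 : ((((S : ℂ) - (D : ℂ) * h') ^ 2 - 4 * (S : ℂ)) ^ ((1:ℂ)/2)).re = 0 := by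
          rw [hwc]; exact cpow_half_re_of_neg w hw0
        rw [show -((D:ℂ) * h' + S + (((S : ℂ) - (D : ℂ) * h') ^ 2 - 4 * (S : ℂ)) ^ ((1:ℂ)/2)) / 2
            = ((-(D * h' + S) / 2 : ℝ) : ℂ) +
              ((-(1/2 : ℝ)) : ℂ) * ((((S : ℂ) - (D : ℂ) * h') ^ 2 - 4 * (S : ℂ)) ^ ((1:ℂ)/2)) by
          push_cast; ring]
        simp only [Complex.add_re, Complex.ofReal_re, Complex.neg_re, neg_mul,
          Complex.re_ofReal_mul, hre0, mul_zero, neg_zero, add_zero]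
        linarith
    · rcases le_or_gt 0 w with hw0 | hw0
      · rw [hwc, cpow_half_of_nonneg w hw0,
          show -((D:ℂ) * h' + S - ((Real.sqrt w : ℝ) : ℂ)) / 2
              = ((-(D * h' + S - Real.sqrt w) / 2 : ℝ) : ℂ) by push_cast; ring,
          Complex.ofReal_re]
        have : Real.sqrt w < D * h' + S := (Real.sqrt_lt' hc).2 hwlt
        linarith
      · have hre0 : ((((S : ℂ) - (D : ℂ) * h') ^ 2 - 4 * (S : ℂ)) ^ ((1:ℂ)/2)).re = 0 := by
          rw [hwc]; exact cpow_half_re_of_neg w hw0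
        rw [show -((D:ℂ) * h' + S - (((S : ℂ) - (D : ℂ) * h') ^ 2 - 4 * (S : ℂ)) ^ ((1:ℂ)/2)) / 2
            = ((-(D * h' + S) / 2 : ℝ) : ℂ) +
              (((1/2 : ℝ)) : ℂ) * ((((S : ℂ) - (D : ℂ) * h') ^ 2 - 4 * (S : ℂ)) ^ ((1:ℂ)/2)) by
          push_cast; ring]
        simp only [Complex.add_re, Complex.ofReal_re, Complex.neg_re, neg_mul,
          Complex.re_ofReal_mul, hre0, mul_zero, neg_zero, add_zero]
        linarith
end

section
/- Let S > 0, T > 0, D_B > 0, K ∈ ℝ, and h ≥ 0. The eigenvalues of the diffusion-modified Jacobian L_h at E₂ = (S, 0, 1, 0) are -S, 1 - D_B·h - K - S, and -(h + S ± √((h - S)² - 4S))/2. All eigenvalues have negative real part for every h ≥ 0 if and only if K > 1 - S. -/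
open Polynomial

/-- Diffusion-modified Jacobian of the plant-soil model at E₂ = (S, 0, 1, 0):
the Jacobian with h subtracted from the (1,1) entry and D·h from the (2,2) entry. -/
noncomputable def LE2 (K S T D : ℝ) (h : ℝ) : Matrix (Fin 4) (Fin 4) ℂ :=
  !![1 - 0 - 1 - (K : ℂ) * 0 - (h : ℂ), -(S : ℂ), -(S : ℂ), -(K : ℂ) * S;
     -0, 1 - (S : ℂ) - (K : ℂ) * 1 - 0 - (D : ℂ) * h, -(K : ℂ) * 0, -0;
     1, 0, -(S : ℂ), 0;
     0, (T : ℂ), 0, -(S : ℂ)]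

theorem det_fin_four_aux {R : Type*} [CommRing R] (A : Matrix (Fin 4) (Fin 4) R) :
    Matrix.det A =
      A 0 0 * (A 1 1 * A 2 2 * A 3 3 - A 1 1 * A 2 3 * A 3 2 - A 1 2 * A 2 1 * A 3 3
        + A 1 2 * A 2 3 * A 3 1 + A 1 3 * A 2 1 * A 3 2 - A 1 3 * A 2 2 * A 3 1)
      - A 0 1 * (A 1 0 * A 2 2 * A 3 3 - A 1 0 * A 2 3 * A 3 2 - A 1 2 * A 2 0 * A 3 3
        + A 1 2 * A 2 3 * A 3 0 + A 1 3 * A 2 0 * A 3 2 - A 1 3 * A 2 2 * A 3 0)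
      + A 0 2 * (A 1 0 * A 2 1 * A 3 3 - A 1 0 * A 2 3 * A 3 1 - A 1 1 * A 2 0 * A 3 3
        + A 1 1 * A 2 3 * A 3 0 + A 1 3 * A 2 0 * A 3 1 - A 1 3 * A 2 1 * A 3 0)
      - A 0 3 * (A 1 0 * A 2 1 * A 3 2 - A 1 0 * A 2 2 * A 3 1 - A 1 1 * A 2 0 * A 3 2
        + A 1 1 * A 2 2 * A 3 0 + A 1 2 * A 2 0 * A 3 1 - A 1 2 * A 2 1 * A 3 0) := by
  rw [Matrix.det_succ_row_zero, Fin.sum_univ_four]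
  simp [Matrix.det_fin_three, Matrix.submatrix_apply, Fin.succAbove, Fin.lt_def, Fin.succ,
    Fin.castSucc, Fin.castAdd, Fin.castLE, show ((3:Fin 4):ℕ) = 3 from rfl]
  ring

theorem LE2_charpoly_eq (K S T D h : ℝ) :
    (LE2 K S T D h).charpoly =
      (X - C (-(S:ℂ))) * (X - C (1 - (D:ℂ)*h - K - S)) *
        (X^2 + C ((h:ℂ)+S) * X + C ((S:ℂ)*h+S)) := by
  rw [Matrix.charpoly, det_fin_four_aux]
  simp only [LE2, Matrix.charmatrix_apply, Matrix.diagonal_apply, Matrix.one_apply,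
    Matrix.of_apply, Matrix.cons_val', Matrix.cons_val_zero, Matrix.cons_val_one,
    Matrix.head_cons, Matrix.empty_val', Matrix.cons_val_fin_one, Matrix.head_fin_const,
    Matrix.cons_val_two, Matrix.tail_cons, Matrix.cons_val_three, Fin.isValue]
  norm_num [Fin.ext_iff, show ((3:Fin 4):ℕ) = 3 from rfl]
  ring

theorem dsq_eq (S h : ℝ) :
    ((((h : ℂ) - S) ^ 2 - 4 * (S : ℂ)) ^ ((1 : ℂ) / 2)) ^ 2 = ((h:ℂ) - S)^2 - 4*S := by
  by_cases hz : ((h:ℂ) - S)^2 - 4*(S:ℂ) = 0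
  · rw [hz, Complex.zero_cpow (by norm_num : (1:ℂ)/2 ≠ 0)]
    norm_num
  · rw [sq, ← Complex.cpow_add _ _ hz]
    norm_num

theorem LE2_charpoly_fac (K S T D h : ℝ) :
    (LE2 K S T D h).charpoly =
      (X - C (-(S:ℂ))) * (X - C (1 - (D:ℂ)*h - K - S)) *
        ((X - C (-((h:ℂ)+S+ (((h : ℂ) - S) ^ 2 - 4 * (S : ℂ)) ^ ((1 : ℂ) / 2))/2)) *
         (X - C (-((h:ℂ)+S- (((h : ℂ) - S) ^ 2 - 4 * (S : ℂ)) ^ ((1 : ℂ) / 2))/2))) := by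
  set d : ℂ := (((h : ℂ) - S) ^ 2 - 4 * (S : ℂ)) ^ ((1 : ℂ) / 2) with hd
  have hd2 : d ^ 2 = ((h:ℂ) - S)^2 - 4*S := dsq_eq S h
  have hquad : (X - C (-((h:ℂ)+S+d)/2)) * (X - C (-((h:ℂ)+S-d)/2))
      = X^2 + C ((h:ℂ)+S) * X + C ((S:ℂ)*h+S) := by
    have h1 : (-((h:ℂ)+S+d)/2) + (-((h:ℂ)+S-d)/2) = -((h:ℂ)+S) := by ring
    have h2 : (-((h:ℂ)+S+d)/2) * (-((h:ℂ)+S-d)/2) = (S:ℂ)*h+S := by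
      field_simp
      linear_combination -hd2
    have hexp : (X - C (-((h:ℂ)+S+d)/2)) * (X - C (-((h:ℂ)+S-d)/2))
        = X^2 - C ((-((h:ℂ)+S+d)/2) + (-((h:ℂ)+S-d)/2)) * X
          + C ((-((h:ℂ)+S+d)/2) * (-((h:ℂ)+S-d)/2)) := by
      simp only [_root_.map_add, _root_.map_mul]; ring
    rw [hexp, h1, h2]
    simp only [_root_.map_neg, _root_.map_add]
    ring
  rw [hquad, LE2_charpoly_eq]

theorem LE2_roots (K S T D h : ℝ) :
    (LE2 K S T D h).charpoly.roots =
      {-(S : ℂ), 1 - (D : ℂ) * h - (K : ℂ) - (S : ℂ),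
        -((h : ℂ) + S + (((h : ℂ) - S) ^ 2 - 4 * (S : ℂ)) ^ ((1 : ℂ) / 2)) / 2,
        -((h : ℂ) + S - (((h : ℂ) - S) ^ 2 - 4 * (S : ℂ)) ^ ((1 : ℂ) / 2)) / 2} := by
  rw [LE2_charpoly_fac]
  rw [roots_mul (mul_ne_zero (mul_ne_zero (X_sub_C_ne_zero _) (X_sub_C_ne_zero _))
        (mul_ne_zero (X_sub_C_ne_zero _) (X_sub_C_ne_zero _))),
      roots_mul (mul_ne_zero (X_sub_C_ne_zero _) (X_sub_C_ne_zero _)),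
      roots_mul (mul_ne_zero (X_sub_C_ne_zero _) (X_sub_C_ne_zero _))]
  simp only [roots_X_sub_C]
  rfl

theorem E2_spatial_eigenvalues_and_stability (K S T D h : ℝ)
    (hS : 0 < S) (hT : 0 < T) (hD : 0 < D) (hh : 0 ≤ h) :
    let d : ℂ := (((h : ℂ) - S) ^ 2 - 4 * (S : ℂ)) ^ ((1 : ℂ) / 2)
    (LE2 K S T D h).charpoly.roots =
      {-(S : ℂ), 1 - (D : ℂ) * h - (K : ℂ) - (S : ℂ),
        -((h : ℂ) + S + d) / 2, -((h : ℂ) + S - d) / 2} ∧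
    ((∀ h' : ℝ, 0 ≤ h' → ∀ μ ∈ (LE2 K S T D h').charpoly.roots, μ.re < 0) ↔
      1 - S < K) := by
  intro d
  refine ⟨LE2_roots K S T D h, ?_⟩
  constructor
  · intro hall
    have h2 := hall 0 le_rfl (1 - (D : ℂ) * 0 - (K : ℂ) - (S : ℂ)) (by
      rw [LE2_roots]
      simp)
    simp at h2
    linarith
  · intro hK h' hh' μ hμ
    rw [LE2_roots] at hμ
    set d' : ℂ := (((h' : ℂ) - S) ^ 2 - 4 * (S : ℂ)) ^ ((1 : ℂ) / 2) with hd'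
    have hd2 : d' ^ 2 = ((h':ℂ) - S)^2 - 4*S := dsq_eq S h'
    -- real/imaginary parts of d'
    have hre : d'.re * d'.re - d'.im * d'.im = (h' - S)^2 - 4*S := by
      have := congrArg Complex.re hd2
      simpa [pow_two, Complex.mul_re, Complex.sub_re, Complex.ofReal_re, Complex.sub_im,
        Complex.mul_im] using this
    have him : d'.re * d'.im + d'.im * d'.re = 0 := by
      have := congrArg Complex.im hd2
      simpa [pow_two, Complex.mul_im, Complex.mul_re] using this
    have habs : d'.re ^ 2 < (h' + S) ^ 2 := by
      rcases mul_eq_zero.1 (by linarith : d'.re * d'.im = 0) with h0 | h0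
      · rw [h0]; nlinarith
      · rw [h0] at hre; nlinarith
    have hlt : |d'.re| < h' + S := by
      rw [abs_lt]
      constructor <;> nlinarith [sq_abs d'.re, abs_nonneg d'.re]
    simp only [Multiset.insert_eq_cons, Multiset.mem_cons, Multiset.mem_singleton] at hμ
    rcases hμ with rfl | rfl | rfl | rfl
    · simpa using hS
    · simp only [Complex.sub_re, Complex.one_re, Complex.mul_re, Complex.ofReal_re,
        Complex.ofReal_im, Complex.one_im, Complex.mul_im]
      nlinarith [mul_nonneg hD.le hh']
    · have : (-((h' : ℂ) + S + d') / 2).re = (-(h' + S + d'.re)) / 2 := by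
        simp [Complex.div_re, Complex.add_re, Complex.neg_re, Complex.normSq]
      rw [this]
      cases abs_lt.1 hlt; linarith
    · have : (-((h' : ℂ) + S - d') / 2).re = (-(h' + S - d'.re)) / 2 := by
        simp [Complex.div_re, Complex.add_re, Complex.sub_re, Complex.neg_re, Complex.normSq]
      rw [this]
      cases abs_lt.1 hlt; linarith
end

section
/- For S > 0, T > 0, h ≥ 0, D_B > 0, the pair of complex numbers -(D_B·h + S ± √((S - D_B·h)² - 4S))/2 both have strictly negative real part. -/
theorem spatial_eigenvalue_pair_negative_real_part (S T h D : ℝ)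
    (hS : 0 < S) (hT : 0 < T) (hh : 0 ≤ h) (hD : 0 < D) :
    let d : ℂ := (((S : ℂ) - (D : ℂ) * h) ^ 2 - 4 * (S : ℂ)) ^ ((1 : ℂ) / 2)
    (-((D : ℂ) * h + S + d) / 2).re < 0 ∧ (-((D : ℂ) * h + S - d) / 2).re < 0 := by
  intro d
  have hxc : ((S : ℂ) - (D : ℂ) * h) ^ 2 - 4 * (S : ℂ)
      = ((((S - D * h) ^ 2 - 4 * S : ℝ)) : ℂ) := by push_cast; ring
  set x : ℝ := (S - D * h) ^ 2 - 4 * S with hxdef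
  have hA : 0 < D * h + S := by positivity
  rcases le_or_gt 0 x with hx0 | hx0
  · -- real square root case
    have hd : d = (Real.sqrt x : ℂ) := by
      show (((S : ℂ) - (D : ℂ) * h) ^ 2 - 4 * (S : ℂ)) ^ ((1 : ℂ) / 2) = _
      rw [hxc]
      rw [show ((1 : ℂ) / 2) = (((1 / 2 : ℝ)) : ℂ) by push_cast; ring]
      rw [← Complex.ofReal_cpow hx0, ← Real.sqrt_eq_rpow]
    have hs : Real.sqrt x < D * h + S := by
      rw [Real.sqrt_lt' hA]
      have : 0 ≤ S * (D * h) := by positivity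
      nlinarith
    have hs0 : 0 ≤ Real.sqrt x := Real.sqrt_nonneg x
    constructor
    · have : -((D : ℂ) * h + S + d) / 2 = (((-(D * h + S + Real.sqrt x) / 2 : ℝ)) : ℂ) := by
        rw [hd]; push_cast; ring
      rw [this, Complex.ofReal_re]
      linarith
    · have : -((D : ℂ) * h + S - d) / 2 = (((-(D * h + S - Real.sqrt x) / 2 : ℝ)) : ℂ) := by
        rw [hd]; push_cast; ring
      rw [this, Complex.ofReal_re]
      linarith
  · -- purely imaginary square root case
    have hw : ((x : ℂ)) ≠ 0 := by
      simpa using hx0.ne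
    have hdre : d.re = 0 := by
      show ((((S : ℂ) - (D : ℂ) * h) ^ 2 - 4 * (S : ℂ)) ^ ((1 : ℂ) / 2)).re = (0:ℝ)
      rw [hxc, Complex.cpow_def_of_ne_zero hw]
      rw [Complex.exp_re]
      have him : (Complex.log (x : ℂ) * (1 / 2)).im = Real.pi / 2 := by
        simp [Complex.mul_im, Complex.log_im, Complex.arg_ofReal_of_neg hx0]
        ring
      rw [him, Real.cos_pi_div_two, mul_zero]
    constructor
    · have : (-((D : ℂ) * h + S + d) / 2).re = (-(D * h + S) - d.re) / 2 := by
        simp [Complex.div_re, Complex.normSq]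
        ring
      rw [this, hdre]
      linarith
    · have : (-((D : ℂ) * h + S - d) / 2).re = (-(D * h + S) + d.re) / 2 := by
        simp [Complex.div_re, Complex.normSq]
        ring
      rw [this, hdre]
      linarith
end

section
/- Let S > 0, T = 1, and define f(K) = A₁A₂A₃ - A₃² - A₁²A₄ with A₁ = 2S, A₂ = S[(2K+S+2)/(K+S+1)² + S], A₃ = 2S²/(K+S+1)², A₄ = S²(1-K-S)/(1+K+S). Then f(-S) = 0 and f'(-S) = 8S⁵ > 0. -/
/-! At `K = -S` the shifted variable `K + S + 1` equals `1`, so every denominator is `1` and the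
coefficients take the values `A₂ = 2S`, `A₃ = 2S²`, `A₄ = S²` with derivatives `2S(S - 1)`,
`-4S²`, `-2S²`. Substituting into `f = A₁A₂A₃ - A₃² - A₁²A₄` and its product-rule derivative
gives `f(-S) = 0` and `f'(-S) = 8S⁵`. -/

theorem HasDerivAt.routhHurwitz_det {a₂ a₃ a₄ : ℝ → ℝ} {a₂' a₃' a₄' x : ℝ} (a₁ : ℝ)
    (h₂ : HasDerivAt a₂ a₂' x) (h₃ : HasDerivAt a₃ a₃' x) (h₄ : HasDerivAt a₄ a₄' x) :
    HasDerivAt (fun K => a₁ * a₂ K * a₃ K - a₃ K ^ 2 - a₁ ^ 2 * a₄ K)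
      (a₁ * (a₂' * a₃ x + a₂ x * a₃') - 2 * a₃ x * a₃' - a₁ ^ 2 * a₄') x := by
  refine ((((h₂.const_mul a₁).mul h₃).sub (h₃.pow 2)).sub (h₄.const_mul (a₁ ^ 2))).congr_deriv ?_
  norm_num; ring

noncomputable section

namespace PlantSoil

variable (S : ℝ)

def a₂ (K : ℝ) : ℝ := S * ((2 * K + S + 2) / (K + S + 1) ^ 2 + S)

def a₃ (K : ℝ) : ℝ := 2 * S ^ 2 / (K + S + 1) ^ 2

def a₄ (K : ℝ) : ℝ := S ^ 2 * (1 - K - S) / (1 + K + S)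

lemma shift_neg : -S + S + 1 = 1 := by ring

lemma hasDerivAt_shift : HasDerivAt (fun K : ℝ => K + S + 1) 1 (-S) :=
  ((hasDerivAt_id' (-S)).add_const S).add_const 1

lemma a₂_neg : a₂ S (-S) = 2 * S := by
  rw [a₂, shift_neg]; ring

lemma a₃_neg : a₃ S (-S) = 2 * S ^ 2 := by
  rw [a₃, shift_neg]; ring

lemma a₄_neg : a₄ S (-S) = S ^ 2 := by
  rw [a₄, show 1 + -S + S = 1 by ring]; ring

lemma hasDerivAt_a₂ : HasDerivAt (a₂ S) (2 * S * (S - 1)) (-S) := by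
  have hnum : HasDerivAt (fun K : ℝ => 2 * K + S + 2) 2 (-S) := by
    simpa using (((hasDerivAt_id' (-S)).const_mul 2).add_const S).add_const 2
  refine (((hnum.div ((hasDerivAt_shift S).pow 2) (by norm_num)).add_const S).const_mul S
    ).congr_deriv ?_
  norm_num; ring

lemma hasDerivAt_a₃ : HasDerivAt (a₃ S) (-4 * S ^ 2) (-S) := by
  refine ((hasDerivAt_const (-S) (2 * S ^ 2)).div ((hasDerivAt_shift S).pow 2) (by norm_num)
    ).congr_deriv ?_
  norm_num; ring

lemma hasDerivAt_a₄ : HasDerivAt (a₄ S) (-2 * S ^ 2) (-S) := by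
  have hnum : HasDerivAt (fun K : ℝ => S ^ 2 * (1 - K - S)) (-S ^ 2) (-S) := by
    simpa using (((hasDerivAt_id' (-S)).const_sub 1).sub_const S).const_mul (S ^ 2)
  have hden : HasDerivAt (fun K : ℝ => 1 + K + S) 1 (-S) := by
    simpa using ((hasDerivAt_id' (-S)).const_add 1).add_const S
  refine (hnum.div hden (by norm_num)).congr_deriv ?_
  norm_num; ring

end PlantSoil

end

theorem hopf_routh_hurwitz_transversality (S : ℝ) (hS : 0 < S) :
    let A1 : ℝ := 2 * S
    let A2 : ℝ → ℝ := fun K => S * ((2 * K + S + 2) / (K + S + 1) ^ 2 + S)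
    let A3 : ℝ → ℝ := fun K => 2 * S ^ 2 / (K + S + 1) ^ 2
    let A4 : ℝ → ℝ := fun K => S ^ 2 * (1 - K - S) / (1 + K + S)
    let f : ℝ → ℝ := fun K => A1 * A2 K * A3 K - (A3 K) ^ 2 - A1 ^ 2 * A4 K
    f (-S) = 0 ∧ HasDerivAt f (8 * S ^ 5) (-S) ∧ 0 < 8 * S ^ 5 := by
  intro A1 A2 A3 A4 f
  refine ⟨?_, ?_, by positivity⟩
  · change 2 * S * PlantSoil.a₂ S (-S) * PlantSoil.a₃ S (-S) - PlantSoil.a₃ S (-S) ^ 2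
      - (2 * S) ^ 2 * PlantSoil.a₄ S (-S) = 0
    rw [PlantSoil.a₂_neg, PlantSoil.a₃_neg, PlantSoil.a₄_neg]; ring
  · have hf := (PlantSoil.hasDerivAt_a₂ S).routhHurwitz_det (2 * S) (PlantSoil.hasDerivAt_a₃ S)
      (PlantSoil.hasDerivAt_a₄ S)
    rw [PlantSoil.a₂_neg, PlantSoil.a₃_neg] at hf
    exact hf.congr_deriv (by ring)
end
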